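/- Let H be a complex Hilbert space, G : H → H a bounded linear operator with S := −(1/2)(G + G*) satisfying ⟨x, Sx⟩ ≥ 0 for all x, and √S its positive square root. Fix f ∈ H and for λ > 0 let u_λ := (λ I − G)^{−1} f. Assume √λ ‖u_λ‖ → 0 and √S u_λ → v in H as λ → 0⁺. Then the limit σ² := 2 lim_{λ → 0⁺} Re ⟨f, u_λ⟩ exists, is finite and nonnegative, and equals 2‖v‖². -/

import Mathlib

/-!
Taking real parts in `⟪f, u_λ⟫ = λ‖u_λ‖² - ⟪G u_λ, u_λ⟫` and using
`Re ⟪G x, x⟫ = -Re ⟪x, S x⟫ = -‖√S x‖²` (as `√S` is self-adjoint) gives the energy identity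
`Re ⟪f, u_λ⟫ = (√λ ‖u_λ‖)² + ‖√S u_λ‖²`, whose right-hand side tends to `‖v‖²`.
-/

open Filter ComplexOrder

namespace ContinuousLinearMap

open RCLike
open scoped InnerProductSpace InnerProduct

variable {𝕜 E : Type*} [RCLike 𝕜] [NormedAddCommGroup E] [InnerProductSpace 𝕜 E] [CompleteSpace E]

theorem inner_add_adjoint_apply_self (G : E →L[𝕜] E) (x : E) :
    ⟪x, (G + G†) x⟫_𝕜 = 2 * re ⟪G x, x⟫_𝕜 := by
  rw [add_apply, inner_add_right, adjoint_inner_right, ← inner_conj_symm x (G x),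
    add_comm, add_conj, mul_comm]

theorem re_inner_neg_half_smul_add_adjoint_apply_self (G : E →L[𝕜] E) (x : E) :
    re ⟪x, ((-(2 : 𝕜)⁻¹) • (G + G†)) x⟫_𝕜 = -re ⟪G x, x⟫_𝕜 := by
  rw [smul_apply, inner_smul_right, inner_add_adjoint_apply_self]
  simp

end ContinuousLinearMap

section Complex

variable {H : Type*} [NormedAddCommGroup H] [InnerProductSpace ℂ H]

-- Over `ℂ`, `0 ≤ ⟪x, T x⟫` in the complex order forces `⟪x, T x⟫` to be real.
theorem ContinuousLinearMap.isPositive_of_inner_nonneg {T : H →L[ℂ] H}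
    (hT : ∀ x, 0 ≤ inner ℂ x (T x)) : T.IsPositive := by
  have hreal (x : H) : inner ℂ (T x) x = inner ℂ x (T x) := by
    rw [← inner_conj_symm]; exact (hT x).isSelfAdjoint
  refine T.isPositive_iff.2 ⟨?_, fun x => hreal x ▸ hT x⟩
  exact (LinearMap.isSymmetric_iff_inner_map_self_real _).2 fun x => by
    simp only [coe_coe, hreal, inner_conj_symm]

theorem re_inner_eq_of_sub_apply_eq (G : H →L[ℂ] H) {lam : ℝ} {u f : H}
    (hu : lam • u - G u = f) : (inner ℂ f u).re = lam * ‖u‖ ^ 2 - (inner ℂ (G u) u).re := by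
  rw [← hu, ← Complex.coe_smul, inner_sub_left, inner_smul_left, Complex.conj_ofReal,
    Complex.sub_re, Complex.re_ofReal_mul, ← RCLike.re_to_complex, inner_self_eq_norm_sq]

theorem re_inner_eq_norm_sq_add_norm_sq_of_sub_apply_eq [CompleteSpace H] {G R : H →L[ℂ] H}
    (hR : R.IsPositive) (hRR : R ∘L R = (-(2 : ℂ)⁻¹) • (G + ContinuousLinearMap.adjoint G))
    {lam : ℝ} {u f : H} (hu : lam • u - G u = f) :
    (inner ℂ f u).re = lam * ‖u‖ ^ 2 + ‖R u‖ ^ 2 := by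
  rw [re_inner_eq_of_sub_apply_eq G hu, R.apply_norm_sq_eq_inner_adjoint_right,
    hR.isSelfAdjoint.adjoint_eq, hRR,
    ContinuousLinearMap.re_inner_neg_half_smul_add_adjoint_apply_self, RCLike.re_to_complex,
    sub_eq_add_neg]

end Complex

theorem kipnis_varadhan_limiting_variance_general {H : Type*}
    [NormedAddCommGroup H] [InnerProductSpace ℂ H] [CompleteSpace H]
    (G S sqrtS : H →L[ℂ] H)
    (hSdef : S = (-(2 : ℂ)⁻¹) • (G + ContinuousLinearMap.adjoint G))
    (hsqrtSpos : ∀ x : H, 0 ≤ (inner ℂ x (sqrtS x) : ℂ))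
    (hsqrtS : sqrtS ∘L sqrtS = S)
    (f : H) (u : ℝ → H)
    (hu : ∀ lam : ℝ, 0 < lam → lam • u lam - G (u lam) = f)
    (hA : Tendsto (fun lam : ℝ => Real.sqrt lam * ‖u lam‖)
      (nhdsWithin (0 : ℝ) (Set.Ioi 0)) (nhds 0))
    (v : H)
    (hB : Tendsto (fun lam : ℝ => sqrtS (u lam)) (nhdsWithin (0 : ℝ) (Set.Ioi 0)) (nhds v)) :
    Tendsto (fun lam : ℝ => 2 * (inner ℂ f (u lam) : ℂ).re)
      (nhdsWithin (0 : ℝ) (Set.Ioi 0)) (nhds (2 * ‖v‖ ^ 2)) := by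
  have hpos := ContinuousLinearMap.isPositive_of_inner_nonneg hsqrtSpos
  have hlim : Tendsto (fun lam : ℝ => 2 * ((Real.sqrt lam * ‖u lam‖) ^ 2 + ‖sqrtS (u lam)‖ ^ 2))
      (nhdsWithin (0 : ℝ) (Set.Ioi 0)) (nhds (2 * ‖v‖ ^ 2)) := by
    simpa using ((hA.pow 2).add (hB.norm.pow 2)).const_mul 2
  refine hlim.congr' ?_
  filter_upwards [self_mem_nhdsWithin] with lam hlam
  rw [re_inner_eq_norm_sq_add_norm_sq_of_sub_apply_eq hpos (hsqrtS.trans hSdef) (hu lam hlam),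
    mul_pow, Real.sq_sqrt hlam.le]

/-- existence of the limiting variance in the Kipnis–Varadhan theory.
With `G` bounded, `S = -(G+G*)/2 ≥ 0` with positive square root `√S`, resolvent vectors
`u_λ = (λI - G)^{-1} f`, and assuming `√λ‖u_λ‖ → 0` and `√S u_λ → v` as `λ → 0⁺`, the
limit `σ² = 2 lim_{λ→0⁺} Re⟨f, u_λ⟩` exists, is finite and nonnegative, and equals
`2‖v‖²`. -/
theorem kipnis_varadhan_limiting_variance {H : Type*}
    [NormedAddCommGroup H] [InnerProductSpace ℂ H] [CompleteSpace H]
    (G S sqrtS : H →L[ℂ] H)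
    (hSdef : S = (-(2 : ℂ)⁻¹) • (G + ContinuousLinearMap.adjoint G))
    (hSpos : ∀ x : H, 0 ≤ (inner ℂ x (S x) : ℂ))
    (hsqrtSpos : ∀ x : H, 0 ≤ (inner ℂ x (sqrtS x) : ℂ))
    (hsqrtS : sqrtS ∘L sqrtS = S)
    (f : H) (u : ℝ → H)
    (hu : ∀ lam : ℝ, 0 < lam → lam • u lam - G (u lam) = f)
    (hA : Tendsto (fun lam : ℝ => Real.sqrt lam * ‖u lam‖)
      (nhdsWithin (0 : ℝ) (Set.Ioi 0)) (nhds 0))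
    (v : H)
    (hB : Tendsto (fun lam : ℝ => sqrtS (u lam)) (nhdsWithin (0 : ℝ) (Set.Ioi 0)) (nhds v)) :
    Tendsto (fun lam : ℝ => 2 * (inner ℂ f (u lam) : ℂ).re)
      (nhdsWithin (0 : ℝ) (Set.Ioi 0)) (nhds (2 * ‖v‖ ^ 2)) :=
  kipnis_varadhan_limiting_variance_general G S sqrtS hSdef hsqrtSpos hsqrtS f u hu hA v hB
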